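/- Let a, λ ∈ ℝ, J ∈ ℝ³, and y ∈ ℝ³ with y₁ y₂ y₃ = 1. Let 𝒥 be the symmetric hollow matrix with rows [[0, J₃, J₂], [J₃, 0, J₁], [J₂, J₁, 0]] and 𝒳 the antisymmetric matrix with rows [[0, y₃, −y₂], [−y₃, 0, y₁], [y₂, −y₁, 0]]. Then the characteristic-type determinant of the Lax matrix L(λ) = λ I + 𝒥 + a 𝒳 equals det L(λ) = λ³ − H λ + 2K, where H = J₁² + J₂² + J₃² − a² (y₁² + y₂² + y₃²) and K = J₁ J₂ J₃ + a² ( J₁/y₁ + J₂/y₂ + J₃/y₃ ). Hence the spectral invariants of L(λ) generate both integrals of motion of the deformed spherical top. -/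

import Mathlib

open Matrix

/-- The symmetric hollow matrix of angular momentum `𝒥_{ij} = |ε_{ijk}| J_k`. -/
def Jmat (J : Fin 3 → ℝ) : Matrix (Fin 3) (Fin 3) ℝ :=
  !![0, J 2, J 1; J 2, 0, J 0; J 1, J 0, 0]

/-- The antisymmetric matrix of coordinates `𝒳_{ij} = ε_{ijk} y_k`. -/
def Xmat (y : Fin 3 → ℝ) : Matrix (Fin 3) (Fin 3) ℝ :=
  !![0, y 2, -y 1; -y 2, 0, y 0; y 1, -y 0, 0]

theorem Xmat_smul (a : ℝ) (y : Fin 3 → ℝ) : Xmat (a • y) = a • Xmat y := by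
  ext i j
  fin_cases i <;> fin_cases j <;> simp [Xmat]

/-- The two terms cubic in `y` cancel because `Xmat y` is antisymmetric. -/
theorem det_smul_one_add_Jmat_add_Xmat (lam : ℝ) (J y : Fin 3 → ℝ) :
    (lam • (1 : Matrix (Fin 3) (Fin 3) ℝ) + Jmat J + Xmat y).det =
      lam ^ 3 - (J 0 ^ 2 + J 1 ^ 2 + J 2 ^ 2 - (y 0 ^ 2 + y 1 ^ 2 + y 2 ^ 2)) * lam
        + 2 * (J 0 * J 1 * J 2 + (J 0 * (y 1 * y 2) + J 1 * (y 0 * y 2) + J 2 * (y 0 * y 1))) := by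
  simp only [Jmat, Fin.isValue, Xmat, det_fin_three, Matrix.add_apply, Matrix.smul_apply,
    one_apply_eq, smul_eq_mul, mul_one, of_apply, cons_val', cons_val_zero, cons_val_fin_one,
    add_zero, cons_val_one, cons_val, ne_eq, Fin.reduceEq, not_false_eq_true, one_apply_ne,
    mul_zero, zero_add, zero_ne_one, one_ne_zero]
  ring

theorem mul_eq_inv_of_mul_mul_eq_one {α : Type*} [DivisionCommMonoid α] {y₀ y₁ y₂ : α}
    (hy : y₀ * y₁ * y₂ = 1) : y₁ * y₂ = y₀⁻¹ ∧ y₀ * y₂ = y₁⁻¹ ∧ y₀ * y₁ = y₂⁻¹ := by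
  refine ⟨eq_inv_of_mul_eq_one_left ?_, eq_inv_of_mul_eq_one_left ?_, eq_inv_of_mul_eq_one_left hy⟩
  · rwa [mul_comm, ← mul_assoc]
  · rwa [mul_right_comm]

/-- The spectral invariants of the Lax matrix `L(λ) = λ I + 𝒥 + a 𝒳` of the deformed
spherical top generate both integrals of motion: on `y₁y₂y₃ = 1`,
`det L(λ) = λ³ − H λ + 2K` with `H = (J,J) − a²(y,y)` and
`K = J₁J₂J₃ + a²(J₁/y₁ + J₂/y₂ + J₃/y₃)`. -/
theorem deformed_top_spectral_invariants (a lam : ℝ) (J y : Fin 3 → ℝ)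
    (hy : y 0 * y 1 * y 2 = 1) :
    (lam • (1 : Matrix (Fin 3) (Fin 3) ℝ) + Jmat J + a • Xmat y).det =
      lam ^ 3
        - (J 0 ^ 2 + J 1 ^ 2 + J 2 ^ 2 - a ^ 2 * (y 0 ^ 2 + y 1 ^ 2 + y 2 ^ 2)) * lam
        + 2 * (J 0 * J 1 * J 2 + a ^ 2 * (J 0 / y 0 + J 1 / y 1 + J 2 / y 2)) := by
  obtain ⟨h₁₂, h₀₂, h₀₁⟩ := mul_eq_inv_of_mul_mul_eq_one hy
  rw [← Xmat_smul, det_smul_one_add_Jmat_add_Xmat]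
  simp only [Pi.smul_apply, smul_eq_mul, div_eq_mul_inv, ← h₁₂, ← h₀₂, ← h₀₁]
  ring
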